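/- arXiv:1807.08002 — 5 statements merged into one kernel-verified Lean document; each statement's English description precedes it below -/
import Mathlib

section
/- For every integer n ≥ 2 and real number d > 0, there exists κ ∈ (0,1) such that for every integer j ≥ 0, j - d ≤ (1-κ)·(j-d)(n+j+d-2)/(n+2d-2). In fact one can take κ = (1 + ⌊d⌋ - d)/(n + ⌊d⌋ + d - 1), and when d is an integer this gives κ = 1/(n+2d-1). -/
/-- The key combinatorial inequality underlying the epiperimetric inequality
for harmonic functions. -/
theorem stmt_0 (n : ℕ) (hn : 2 ≤ n) (d : ℝ) (hd : 0 < d) :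
    ∃ κ : ℝ, 0 < κ ∧ κ < 1 ∧
      (∀ j : ℕ, (j : ℝ) - d ≤
        (1 - κ) * (((j : ℝ) - d) * ((n : ℝ) + j + d - 2)) / ((n : ℝ) + 2 * d - 2)) ∧
      κ = (1 + (⌊d⌋ : ℝ) - d) / ((n : ℝ) + (⌊d⌋ : ℝ) + d - 1) ∧
      (∀ m : ℤ, d = (m : ℝ) → κ = 1 / ((n : ℝ) + 2 * d - 1)) := by
  have hn2 : (2 : ℝ) ≤ (n : ℝ) := by exact_mod_cast hn
  set F : ℝ := (⌊d⌋ : ℝ) with hF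
  have hFle : F ≤ d := Int.floor_le d
  have hFlt : d < F + 1 := Int.lt_floor_add_one d
  have hF0 : 0 ≤ F := by
    rw [hF]; exact_mod_cast Int.floor_nonneg.mpr hd.le
  have hA : 0 < (n : ℝ) + F + d - 1 := by linarith
  have hB : 0 < (n : ℝ) + 2 * d - 2 := by linarith
  refine ⟨(1 + F - d) / ((n : ℝ) + F + d - 1), ?_, ?_, ?_, rfl, ?_⟩
  · apply div_pos (by linarith) hA
  · rw [div_lt_one hA]; linarith
  · intro j
    have hkey : 0 ≤ ((j : ℝ) - d) * ((j : ℝ) - F - 1) := by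
      rcases le_or_gt (j : ℤ) ⌊d⌋ with h | h
      · have hj : (j : ℝ) ≤ F := by rw [hF]; exact_mod_cast h
        have h1 : (j : ℝ) - d ≤ 0 := by linarith
        have h2 : (j : ℝ) - F - 1 ≤ 0 := by linarith
        nlinarith
      · have hj : F + 1 ≤ (j : ℝ) := by
          rw [hF]; have : ⌊d⌋ + 1 ≤ (j:ℤ) := h; exact_mod_cast this
        have h1 : 0 ≤ (j : ℝ) - d := by linarith
        have h2 : 0 ≤ (j : ℝ) - F - 1 := by linarith
        exact mul_nonneg h1 h2
    rw [le_div_iff₀ hB]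
    have h1k : 1 - (1 + F - d) / ((n : ℝ) + F + d - 1)
        = ((n : ℝ) + 2 * d - 2) / ((n : ℝ) + F + d - 1) := by
      field_simp; ring
    rw [h1k, div_mul_eq_mul_div, le_div_iff₀ hA]
    nlinarith [mul_nonneg hB.le hkey]
  · intro m hm
    have hFd : F = d := by
      rw [hF, hm, Int.floor_intCast]
    rw [hFd]
    rw [show (1 : ℝ) + d - d = 1 by ring, show (n : ℝ) + d + d - 1 = (n:ℝ) + 2*d - 1 by ring]
end

section
/- Let n ≥ 2, d > 0, and let (c_j)_{j≥1} be a square-summable sequence of reals with nonnegative integer weights d_j ≥ 0 such that Σ d_j c_j² < ∞. Define W_f = Σ_j (d_j - d) c_j² and W_u = Σ_j [d² + d_j(n + d_j - 2) - d(n + 2d - 2)]/(n + 2d - 2) · c_j². Then with κ = (1 + ⌊d⌋ - d)/(n + ⌊d⌋ + d - 1) ∈ (0,1), one has W_f ≤ (1-κ) W_u. -/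
/-!
Both energies are diagonal in the spherical harmonics, so the inequality can be checked
coefficient by coefficient. The `W_u`-coefficient of a degree-`m` harmonic factors as
`(m - d)(m + n + d - 2)/(n + 2d - 2)`, and `1 - κ = (n + 2d - 2)/(n + ⌊d⌋ + d - 1)`, so the
coefficientwise inequality reduces to `(m - d)(m - ⌊d⌋ - 1) ≥ 0`: no integer lies strictly
between `⌊d⌋` and `⌊d⌋ + 1`.
-/

noncomputable def epiperimetricConstant (n d : ℝ) : ℝ :=
  (1 + ⌊d⌋ - d) / (n + ⌊d⌋ + d - 1)

/-- The coefficient of `c_j ^ 2` in `W_u` when the `j`-th spherical harmonic has degree `m`. -/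
noncomputable def homogeneousWeissCoeff (n d m : ℝ) : ℝ :=
  (d ^ 2 + m * (n + m - 2) - d * (n + 2 * d - 2)) / (n + 2 * d - 2)

lemma mul_sub_floor_sub_one_nonneg (m : ℤ) (d : ℝ) : 0 ≤ ((m : ℝ) - d) * (m - ⌊d⌋ - 1) := by
  rcases le_or_gt m ⌊d⌋ with h | h
  · have hm : (m : ℝ) ≤ ⌊d⌋ := by exact_mod_cast h
    exact mul_nonneg_of_nonpos_of_nonpos (by linarith [Int.floor_le d]) (by linarith)
  · have hm : (⌊d⌋ : ℝ) + 1 ≤ m := by exact_mod_cast h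
    exact mul_nonneg (by linarith [Int.lt_floor_add_one d]) (by linarith)

section

variable {n d : ℝ}

lemma homogeneousWeissCoeff_eq (m : ℝ) :
    homogeneousWeissCoeff n d m = (m - d) * (m + n + d - 2) / (n + 2 * d - 2) := by
  unfold homogeneousWeissCoeff
  ring

lemma add_floor_add_sub_one_pos (hn : 2 ≤ n) (hd : 0 < d) : 0 < n + ⌊d⌋ + d - 1 := by
  have : (0 : ℝ) ≤ ⌊d⌋ := by exact_mod_cast Int.floor_nonneg.mpr hd.le
  linarith

lemma epiperimetricConstant_pos (hn : 2 ≤ n) (hd : 0 < d) : 0 < epiperimetricConstant n d :=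
  div_pos (by linarith [Int.lt_floor_add_one d]) (add_floor_add_sub_one_pos hn hd)

lemma epiperimetricConstant_lt_one (hn : 2 ≤ n) (hd : 0 < d) : epiperimetricConstant n d < 1 := by
  rw [epiperimetricConstant, div_lt_one (add_floor_add_sub_one_pos hn hd)]
  linarith

lemma one_sub_epiperimetricConstant (h : n + ⌊d⌋ + d - 1 ≠ 0) :
    1 - epiperimetricConstant n d = (n + 2 * d - 2) / (n + ⌊d⌋ + d - 1) := by
  rw [epiperimetricConstant, eq_div_iff h, sub_mul, div_mul_cancel₀ _ h]
  ring

lemma sub_le_one_sub_epiperimetricConstant_mul (hn : 2 ≤ n) (hd : 0 < d) {m : ℝ}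
    (hm : 0 ≤ (m - d) * (m - ⌊d⌋ - 1)) :
    m - d ≤ (1 - epiperimetricConstant n d) * homogeneousWeissCoeff n d m := by
  have hb := add_floor_add_sub_one_pos hn hd
  have ha : n + 2 * d - 2 ≠ 0 := by linarith
  calc m - d ≤ (m - d) * (m + n + d - 2) / (n + ⌊d⌋ + d - 1) := by
        rw [le_div_iff₀ hb]
        nlinarith
    _ = (1 - epiperimetricConstant n d) * homogeneousWeissCoeff n d m := by
        rw [one_sub_epiperimetricConstant hb.ne', homogeneousWeissCoeff_eq, div_mul_div_comm,
          mul_comm (n + 2 * d - 2), mul_div_mul_right _ _ ha]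

/-- The `W_u`-coefficient dominates `|m - d|` up to the factor `(n + d - 2)/(n + 2d - 2) > 0`,
since `m + n + d - 2 ≥ n + d - 2`. -/
lemma summable_sub_mul_of_summable_homogeneousWeissCoeff_mul {ι : Type*} (hn : 2 ≤ n)
    (hd : 0 < d) {m a : ι → ℝ} (hm : ∀ j, 0 ≤ m j) (ha : ∀ j, 0 ≤ a j)
    (h : Summable fun j => homogeneousWeissCoeff n d (m j) * a j) :
    Summable fun j => (m j - d) * a j := by
  have he : 0 < n + 2 * d - 2 := by linarith
  have hf : 0 < n + d - 2 := by linarith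
  refine Summable.of_norm_bounded ((h.abs.mul_right (n + 2 * d - 2)).div_const (n + d - 2))
    fun j => ?_
  have hcoeff : |homogeneousWeissCoeff n d (m j) * a j| * (n + 2 * d - 2) =
      |m j - d| * a j * (m j + n + d - 2) := by
    rw [homogeneousWeissCoeff_eq, abs_mul, abs_div, abs_mul, abs_of_nonneg (ha j), abs_of_pos he,
      abs_of_nonneg (a := m j + n + d - 2) (by linarith [hm j]),
      mul_right_comm, div_mul_cancel₀ _ he.ne']
    ring
  rw [Real.norm_eq_abs, abs_mul, abs_of_nonneg (ha j), le_div_iff₀ hf, hcoeff]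
  exact mul_le_mul_of_nonneg_left (by linarith [hm j]) (mul_nonneg (abs_nonneg _) (ha j))

end

theorem stmt_1_general (n : ℕ) (hn : 2 ≤ n) (d : ℝ) (hd : 0 < d)
    (c : ℕ → ℝ) (dj : ℕ → ℕ)
    (hWu : Summable fun j =>
      (d ^ 2 + (dj j : ℝ) * ((n : ℝ) + (dj j : ℝ) - 2) - d * ((n : ℝ) + 2 * d - 2)) /
        ((n : ℝ) + 2 * d - 2) * (c j) ^ 2) :
    0 < (1 + (⌊d⌋ : ℝ) - d) / ((n : ℝ) + (⌊d⌋ : ℝ) + d - 1) ∧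
    (1 + (⌊d⌋ : ℝ) - d) / ((n : ℝ) + (⌊d⌋ : ℝ) + d - 1) < 1 ∧
    (∑' j, ((dj j : ℝ) - d) * (c j) ^ 2) ≤
      (1 - (1 + (⌊d⌋ : ℝ) - d) / ((n : ℝ) + (⌊d⌋ : ℝ) + d - 1)) *
        ∑' j, (d ^ 2 + (dj j : ℝ) * ((n : ℝ) + (dj j : ℝ) - 2) - d * ((n : ℝ) + 2 * d - 2)) /
          ((n : ℝ) + 2 * d - 2) * (c j) ^ 2 := by
  have hn' : (2 : ℝ) ≤ n := by exact_mod_cast hn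
  refine ⟨epiperimetricConstant_pos hn' hd, epiperimetricConstant_lt_one hn' hd, ?_⟩
  have hterm (j : ℕ) : ((dj j : ℝ) - d) * c j ^ 2 ≤
      (1 - epiperimetricConstant n d) * (homogeneousWeissCoeff n d (dj j) * c j ^ 2) := by
    rw [← mul_assoc]
    refine mul_le_mul_of_nonneg_right (sub_le_one_sub_epiperimetricConstant_mul hn' hd ?_)
      (sq_nonneg _)
    exact_mod_cast mul_sub_floor_sub_one_nonneg (dj j) d
  have hWf := summable_sub_mul_of_summable_homogeneousWeissCoeff_mul hn' hd
    (fun j => Nat.cast_nonneg (dj j)) (fun j => sq_nonneg (c j)) hWu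
  rw [← tsum_mul_left]
  exact hWf.tsum_le_tsum hterm (hWu.mul_left _)

/-- Spectral form of the epiperimetric inequality for harmonic functions. -/
theorem stmt_1 (n : ℕ) (hn : 2 ≤ n) (d : ℝ) (hd : 0 < d)
    (c : ℕ → ℝ) (dj : ℕ → ℕ)
    (hc : Summable fun j => (c j) ^ 2)
    (hdc : Summable fun j => (dj j : ℝ) * (c j) ^ 2)
    (hWu : Summable fun j =>
      (d ^ 2 + (dj j : ℝ) * ((n : ℝ) + (dj j : ℝ) - 2) - d * ((n : ℝ) + 2 * d - 2)) /
        ((n : ℝ) + 2 * d - 2) * (c j) ^ 2) :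
    0 < (1 + (⌊d⌋ : ℝ) - d) / ((n : ℝ) + (⌊d⌋ : ℝ) + d - 1) ∧
    (1 + (⌊d⌋ : ℝ) - d) / ((n : ℝ) + (⌊d⌋ : ℝ) + d - 1) < 1 ∧
    (∑' j, ((dj j : ℝ) - d) * (c j) ^ 2) ≤
      (1 - (1 + (⌊d⌋ : ℝ) - d) / ((n : ℝ) + (⌊d⌋ : ℝ) + d - 1)) *
        ∑' j, (d ^ 2 + (dj j : ℝ) * ((n : ℝ) + (dj j : ℝ) - 2) - d * ((n : ℝ) + 2 * d - 2)) /
          ((n : ℝ) + 2 * d - 2) * (c j) ^ 2 :=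
  stmt_1_general n hn d hd c dj hWu
end

section
/- Let Y : [s,r] × ∂B(0,1) → ℝ be given by Y(t,x) = f(tx+Q)/t^d for a C¹ function f vanishing at Q, where 0 < s < r, and let γ > 0. Then ∫_{∂B(0,1)} |Y(r,x) - Y(s,x)|² dσ(x) ≤ ((r^γ - s^γ)/γ) ∫_s^r t^{-γ-(n-2+2d)} ∫_{∂B(Q,t)} (ν·∇f(y) - (d/t) f(y))² dσ(y) dt. -/
open MeasureTheory Metric Filter Set
open scoped ENNReal NNReal Topology RealInnerProductSpace

noncomputable section

abbrev E (n : ℕ) := EuclideanSpace ℝ (Fin n)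

/-- The Laplacian of `f : ℝⁿ → ℝ`, as the sum of second partial derivatives. -/
def lap (n : ℕ) (f : E n → ℝ) (x : E n) : ℝ :=
  ∑ i : Fin n, fderiv ℝ (fun y => fderiv ℝ f y (EuclideanSpace.single i 1)) x
    (EuclideanSpace.single i 1)

/-- The Weiss-type functional
`W_d(r,Q,f) = r^{-(n-2+2d)} ∫_{B(Q,r)} |∇f|² - d r^{-(n-1+2d)} ∫_{∂B(Q,r)} f² dσ`,
with surface measure given by the `(n-1)`-dimensional Hausdorff measure. -/
def weiss (n : ℕ) (d r : ℝ) (Q : E n) (f : E n → ℝ) : ℝ :=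
  (1 / r ^ ((n : ℝ) - 2 + 2 * d)) * (∫ x in ball Q r, ‖gradient f x‖ ^ 2)
    - (d / r ^ ((n : ℝ) - 1 + 2 * d)) * ∫ x in sphere Q r, (f x) ^ 2 ∂μH[(n : ℝ) - 1]

/-!
Along the ray `t ↦ Q + t • x` the blowup `t ↦ f (Q + t • x) / t ^ d` has derivative
`(⟪∇f, x⟫ - (d / t) f) / t ^ d`. The fundamental theorem of calculus and the weighted
Cauchy–Schwarz inequality `(∫ u)² ≤ (∫ w) (∫ u² / w)` with weight `w t = t ^ (γ - 1)` bound
the squared increment between the scales `s` and `r` by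
`(r ^ γ - s ^ γ) / γ * ∫ t ^ (1 - γ - 2 d) (⟪∇f, x⟫ - (d / t) f)²`.
Integrating over the unit sphere, which has finite `μH[n - 1]`-measure, swapping the two
integrals and substituting `y = Q + t • x`, which multiplies `μH[n - 1]` by `t ^ (n - 1)`,
gives the estimate.
-/

section ChangeOfVariables

variable {F : Type*} [NormedAddCommGroup F] [NormedSpace ℝ F]

lemma add_smul_preimage_sphere (Q : F) {t : ℝ} (ht : 0 < t) :
    (fun x => Q + t • x) ⁻¹' sphere Q t = sphere (0 : F) 1 := by
  ext x
  simp [norm_smul, abs_of_pos ht, ht.ne']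

variable [MeasurableSpace F] [BorelSpace F]

lemma map_add_smul_hausdorffMeasure {d : ℝ} (hd : 0 ≤ d) (Q : F) {t : ℝ} (ht : t ≠ 0) :
    Measure.map (fun x => Q + t • x) μH[d] = ‖t‖₊⁻¹ ^ d • μH[d] := by
  have hcomp : (fun x : F => Q + t • x) = AffineMap.homothety Q t ∘ (IsometryEquiv.addLeft Q) := by
    ext x; simp [AffineMap.homothety_apply, add_comm]
  rw [hcomp, ← Measure.map_map (AffineMap.homothety_continuous Q t).measurable
    (IsometryEquiv.addLeft Q).continuous.measurable, IsometryEquiv.map_hausdorffMeasure,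
    map_homothety_hausdorffMeasure hd Q ht]

lemma setIntegral_sphere_eq_rpow_mul {d : ℝ} (hd : 0 ≤ d) (Q : F) {t : ℝ} (ht : 0 < t) (G : F → ℝ) :
    ∫ y in sphere Q t, G y ∂μH[d] = t ^ d * ∫ x in sphere (0 : F) 1, G (Q + t • x) ∂μH[d] := by
  have he : MeasurableEmbedding (fun x : F => Q + t • x) :=
    ((Homeomorph.smulOfNeZero t ht.ne').trans (Homeomorph.addLeft Q)).measurableEmbedding
  rw [← add_smul_preimage_sphere Q ht, ← he.setIntegral_map,
    map_add_smul_hausdorffMeasure hd Q ht.ne', Measure.restrict_smul, integral_smul_nnreal_measure,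
    NNReal.smul_def, smul_eq_mul, ← mul_assoc, NNReal.coe_rpow, NNReal.coe_inv, coe_nnnorm,
    Real.norm_of_nonneg ht.le, Real.inv_rpow ht.le, mul_inv_cancel₀ (by positivity), one_mul]

end ChangeOfVariables

section SphereMeasure

lemma lipschitzOnWith_inv_norm_smul {F : Type*} [NormedAddCommGroup F] [NormedSpace ℝ F] :
    LipschitzOnWith 2 (fun y : F => ‖y‖⁻¹ • y) {y | 1 ≤ ‖y‖} := by
  refine LipschitzOnWith.of_dist_le_mul fun a (ha : 1 ≤ ‖a‖) b (hb : 1 ≤ ‖b‖) => ?_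
  have ha0 : 0 < ‖a‖ := one_pos.trans_le ha
  have hb0 : 0 < ‖b‖ := one_pos.trans_le hb
  rw [dist_eq_norm, dist_eq_norm, NNReal.coe_ofNat]
  calc ‖‖a‖⁻¹ • a - ‖b‖⁻¹ • b‖ = ‖‖a‖⁻¹ • (a - b) + (‖a‖⁻¹ - ‖b‖⁻¹) • b‖ := by
        rw [smul_sub, sub_smul, sub_add_sub_cancel]
    _ ≤ ‖a‖⁻¹ * ‖a - b‖ + |‖b‖ - ‖a‖| / ‖a‖ := by
        refine (norm_add_le _ _).trans_eq ?_
        rw [norm_smul, norm_smul, Real.norm_of_nonneg (inv_nonneg.2 ha0.le), Real.norm_eq_abs,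
          inv_sub_inv ha0.ne' hb0.ne', abs_div, abs_of_pos (mul_pos ha0 hb0)]
        field_simp
    _ ≤ 1 * ‖a - b‖ + ‖a - b‖ / 1 := by
        gcongr
        · exact inv_le_one_of_one_le₀ ha
        · rw [abs_sub_comm]; exact abs_norm_sub_norm_le a b
    _ = 2 * ‖a - b‖ := by ring

lemma hausdorffMeasure_image_lt_top {ι X : Type*} [Fintype ι] [EMetricSpace X] [MeasurableSpace X]
    [BorelSpace X] {K : ℝ≥0} {f : (ι → ℝ) → X} {s : Set (ι → ℝ)} (hf : LipschitzOnWith K f s)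
    (hs : Bornology.IsBounded s) : μH[Fintype.card ι] (f '' s) < ∞ := by
  refine (hf.hausdorffMeasure_image_le (Nat.cast_nonneg _)).trans_lt
    (ENNReal.mul_lt_top (ENNReal.rpow_lt_top_of_nonneg (Nat.cast_nonneg _) ENNReal.coe_ne_top) ?_)
  rw [hausdorffMeasure_pi_real]
  exact hs.measure_lt_top

/-- The radial projections of the faces `{y | y i = c}`, `|c| = 1`, of the cube `[-1, 1]ᵐ⁺¹` cover
the unit sphere, and each is a Lipschitz image of `[-1, 1]ᵐ`. -/
def cubeFace (m : ℕ) (i : Fin (m + 1)) (c : ℝ) (z : Fin m → ℝ) : E (m + 1) :=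
  WithLp.toLp 2 (i.insertNth c z)

lemma lipschitzWith_cubeFace (m : ℕ) (i : Fin (m + 1)) (c : ℝ) :
    LipschitzWith ((m + 1 : ℝ≥0) ^ (2⁻¹ : ℝ)) (cubeFace m i c) := by
  have : Isometry (i.insertNth (α := fun _ => ℝ) c) :=
    Isometry.of_dist_eq fun z z' => by simp [Fin.dist_insertNth_insertNth]
  convert (PiLp.lipschitzWith_toLp 2 fun _ : Fin (m + 1) => ℝ).comp this.lipschitz using 1
  · simp
  · rfl

lemma one_le_norm_cubeFace (m : ℕ) (i : Fin (m + 1)) {c : ℝ} (hc : |c| = 1) (z : Fin m → ℝ) :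
    1 ≤ ‖cubeFace m i c z‖ := by
  simpa [cubeFace, hc] using PiLp.norm_apply_le (cubeFace m i c z) i

lemma sphere_subset_biUnion_image_cubeFace (m : ℕ) :
    sphere (0 : E (m + 1)) 1 ⊆ ⋃ p ∈ (univ ×ˢ {-1, 1} : Set (Fin (m + 1) × ℝ)),
      (fun y => ‖y‖⁻¹ • y) ∘ cubeFace m p.1 p.2 '' closedBall 0 1 := by
  intro x hx
  rw [mem_sphere_zero_iff_norm] at hx
  obtain ⟨i, hi⟩ := Finite.exists_max fun j => |x j|
  set a := |x i|
  have ha : 0 < a := by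
    refine (abs_nonneg _).lt_of_ne' fun ha => ?_
    have : x = 0 := by
      ext j
      exact abs_nonpos_iff.1 (ha ▸ hi j)
    simp [this] at hx
  have hface : cubeFace m i (x i / a) (fun j => x (i.succAbove j) / a) = a⁻¹ • x := by
    ext j
    cases j using Fin.succAboveCases i <;> simp [cubeFace, div_eq_inv_mul]
  refine mem_iUnion₂.2 ⟨(i, x i / a), ⟨mem_univ _, ?_⟩, fun j => x (i.succAbove j) / a, ?_, ?_⟩
  · have : |x i / a| = 1 := by rw [abs_div, abs_abs, div_self ha.ne']
    simpa [or_comm] using (abs_eq zero_le_one).1 this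
  · rw [mem_closedBall_zero_iff, pi_norm_le_iff_of_nonneg zero_le_one]
    intro j
    rw [Real.norm_eq_abs, abs_div, abs_abs, div_le_one ha]
    exact hi _
  · rw [Function.comp_apply, hface, norm_smul, hx, mul_one,
      Real.norm_of_nonneg (inv_nonneg.2 ha.le), inv_inv, smul_inv_smul₀ ha.ne']

lemma hausdorffMeasure_sphere_lt_top {n : ℕ} (hn : 1 ≤ n) :
    μH[(n : ℝ) - 1] (sphere (0 : E n) 1) < ∞ := by
  obtain ⟨m, rfl⟩ : ∃ m, n = m + 1 := ⟨n - 1, by omega⟩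
  rw [Nat.cast_add_one, add_sub_cancel_right]
  refine (measure_mono (sphere_subset_biUnion_image_cubeFace m)).trans_lt
    (measure_biUnion_lt_top (Set.toFinite _) fun p hp => ?_)
  have hc : |p.2| = 1 := by
    simp only [mem_prod, mem_insert_iff, mem_singleton_iff] at hp
    rcases hp.2 with h | h <;> simp [h]
  have hlip := lipschitzOnWith_inv_norm_smul.comp
    (lipschitzWith_cubeFace m p.1 p.2).lipschitzOnWith (s := closedBall 0 1)
    fun z _ => one_le_norm_cubeFace m p.1 hc z
  simpa using hausdorffMeasure_image_lt_top hlip isBounded_closedBall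

end SphereMeasure

lemma sq_integral_le_integral_mul_integral_sq_div {α : Type*} [MeasurableSpace α] {μ : Measure α}
    {u w : α → ℝ} (hw : ∀ᵐ x ∂μ, 0 < w x) (hu : Integrable u μ) (hwi : Integrable w μ)
    (huw : Integrable (fun x => u x ^ 2 / w x) μ) :
    (∫ x, u x ∂μ) ^ 2 ≤ (∫ x, w x ∂μ) * ∫ x, u x ^ 2 / w x ∂μ := by
  have hquad : ∀ c : ℝ,
      0 ≤ (∫ x, w x ∂μ) * (c * c) + (-2 * ∫ x, u x ∂μ) * c + ∫ x, u x ^ 2 / w x ∂μ := by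
    intro c
    have hsplit : ∫ x, (w x * (c * c) + -2 * c * u x + u x ^ 2 / w x) ∂μ
        = (∫ x, w x ∂μ) * (c * c) + (-2 * ∫ x, u x ∂μ) * c + ∫ x, u x ^ 2 / w x ∂μ := by
      have hlin : Integrable (fun x => w x * (c * c) + -2 * c * u x) μ :=
        (hwi.mul_const _).add (hu.const_mul _)
      rw [integral_add hlin huw, integral_add (hwi.mul_const _) (hu.const_mul _),
        integral_mul_const, integral_const_mul]
      ring
    rw [← hsplit]
    refine integral_nonneg_of_ae (hw.mono fun x hx => ?_)
    show 0 ≤ w x * (c * c) + -2 * c * u x + u x ^ 2 / w x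
    have : w x * (c * c) + -2 * c * u x + u x ^ 2 / w x = (w x * c - u x) ^ 2 / w x := by
      field_simp
      ring
    rw [this]
    positivity
  have := discrim_le_zero hquad
  rw [discrim] at this
  linarith

lemma sq_sub_le_mul_integral_rpow_mul_sq_deriv {γ s r : ℝ} (hγ : 0 < γ) (hs : 0 < s) (hsr : s ≤ r)
    {φ φ' : ℝ → ℝ} (hφ : ∀ t ∈ Icc s r, HasDerivAt φ (φ' t) t) (hφ' : ContinuousOn φ' (Icc s r)) :
    (φ r - φ s) ^ 2 ≤ (r ^ γ - s ^ γ) / γ * ∫ t in Icc s r, t ^ (1 - γ) * φ' t ^ 2 := by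
  have hpos : ∀ t ∈ Icc s r, 0 < t := fun t ht => hs.trans_le ht.1
  have hftc : φ r - φ s = ∫ t in Icc s r, φ' t := by
    rw [integral_Icc_eq_integral_Ioc, ← intervalIntegral.integral_of_le hsr,
      intervalIntegral.integral_eq_sub_of_hasDerivAt (by rwa [uIcc_of_le hsr])
        (hφ'.intervalIntegrable_of_Icc hsr)]
  have hweight : ∫ t in Icc s r, t ^ (γ - 1) = (r ^ γ - s ^ γ) / γ := by
    rw [integral_Icc_eq_integral_Ioc, ← intervalIntegral.integral_of_le hsr,
      integral_rpow (Or.inl (by linarith))]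
    simp
  have hw : ContinuousOn (fun t : ℝ => t ^ (γ - 1)) (Icc s r) :=
    continuousOn_id.rpow_const fun t ht => Or.inl (hpos t ht).ne'
  have hdiv : ∀ t ∈ Icc s r, φ' t ^ 2 / t ^ (γ - 1) = t ^ (1 - γ) * φ' t ^ 2 := by
    intro t ht
    rw [div_eq_inv_mul, ← Real.rpow_neg (hpos t ht).le, neg_sub]
  rw [hftc, ← hweight, ← setIntegral_congr_fun measurableSet_Icc hdiv]
  exact sq_integral_le_integral_mul_integral_sq_div
    ((ae_restrict_mem measurableSet_Icc).mono fun t ht => Real.rpow_pos_of_pos (hpos t ht) _)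
    hφ'.integrableOn_Icc hw.integrableOn_Icc
    ((hφ'.pow 2).div hw fun t ht => (Real.rpow_pos_of_pos (hpos t ht) _).ne').integrableOn_Icc

section Ray

variable {F : Type*} [NormedAddCommGroup F] [InnerProductSpace ℝ F] [CompleteSpace F] {f : F → ℝ}

lemma ContDiff.continuous_gradient (hf : ContDiff ℝ 1 f) : Continuous (gradient f) :=
  (InnerProductSpace.toDual ℝ F).symm.continuous.comp (hf.continuous_fderiv one_ne_zero)

lemma hasDerivAt_comp_add_smul_div_rpow (Q x : F) (d : ℝ) {t : ℝ} (ht : 0 < t)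
    (hf : DifferentiableAt ℝ f (Q + t • x)) :
    HasDerivAt (fun t => f (Q + t • x) / t ^ d)
      ((⟪gradient f (Q + t • x), x⟫ - d / t * f (Q + t • x)) / t ^ d) t := by
  have hline : HasDerivAt (fun u : ℝ => Q + u • x) x t := by
    simpa using ((hasDerivAt_id t).smul_const x).const_add Q
  have hpos : 0 < t ^ d := Real.rpow_pos_of_pos ht d
  refine ((hf.hasFDerivAt.comp_hasDerivAt t hline).div (Real.hasDerivAt_rpow_const (Or.inl ht.ne'))
    hpos.ne').congr_deriv ?_
  rw [inner_gradient_left, Real.rpow_sub_one ht.ne']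
  field_simp

lemma sq_sub_comp_add_smul_div_rpow_le (hf : ContDiff ℝ 1 f) (Q x : F) (d : ℝ) {γ s r : ℝ}
    (hγ : 0 < γ) (hs : 0 < s) (hsr : s ≤ r) :
    (f (Q + r • x) / r ^ d - f (Q + s • x) / s ^ d) ^ 2 ≤ (r ^ γ - s ^ γ) / γ *
      ∫ t in Icc s r, t ^ (1 - γ - 2 * d) *
        (⟪gradient f (Q + t • x), x⟫ - d / t * f (Q + t • x)) ^ 2 := by
  have hpos : ∀ t ∈ Icc s r, 0 < t := fun t ht => hs.trans_le ht.1
  have hcont : ContinuousOn (fun t : ℝ =>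
      (⟪gradient f (Q + t • x), x⟫ - d / t * f (Q + t • x)) / t ^ d) (Icc s r) := by
    have hne : ∀ t ∈ Icc s r, t ≠ 0 := fun t ht => (hpos t ht).ne'
    have hne' : ∀ t ∈ Icc s r, t ^ d ≠ 0 := fun t ht => (Real.rpow_pos_of_pos (hpos t ht) d).ne'
    have := hf.continuous_gradient
    have := hf.continuous
    fun_prop (disch := assumption)
  have hweight : ∀ t ∈ Icc s r, t ^ (1 - γ) *
      ((⟪gradient f (Q + t • x), x⟫ - d / t * f (Q + t • x)) / t ^ d) ^ 2
      = t ^ (1 - γ - 2 * d) * (⟪gradient f (Q + t • x), x⟫ - d / t * f (Q + t • x)) ^ 2 := by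
    intro t ht
    rw [div_pow, show 1 - γ - 2 * d = 1 - γ - d * 2 by ring, Real.rpow_sub (hpos t ht) (1 - γ),
      Real.rpow_mul (hpos t ht).le, Real.rpow_two]
    ring
  rw [← setIntegral_congr_fun measurableSet_Icc hweight]
  exact sq_sub_le_mul_integral_rpow_mul_sq_deriv hγ hs hsr
    (fun t ht => hasDerivAt_comp_add_smul_div_rpow Q x d (hpos t ht)
      (hf.differentiable one_ne_zero _))
    hcont

lemma continuousOn_rpow_mul_sq_radial (hf : ContDiff ℝ 1 f) (Q : F) (c d : ℝ) :
    ContinuousOn (fun p : F × ℝ => p.2 ^ c *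
      (⟪gradient f (Q + p.2 • p.1), p.1⟫ - d / p.2 * f (Q + p.2 • p.1)) ^ 2) {p | p.2 ≠ 0} := by
  have := hf.continuous_gradient
  have := hf.continuous
  exact (continuousOn_snd.rpow_const fun p hp => Or.inl hp).mul <|
    ((Continuous.continuousOn (by fun_prop)).sub
      ((continuousOn_const.div continuousOn_snd fun _ hp => hp).mul
        (Continuous.continuousOn (by fun_prop)))).pow 2

variable [MeasurableSpace F] [BorelSpace F]

lemma setIntegral_unitSphere_rpow_mul_sq_radial {k : ℝ} (hk : 0 ≤ k) (Q : F) (c d : ℝ) {t : ℝ}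
    (ht : 0 < t) :
    ∫ x in sphere (0 : F) 1,
        t ^ c * (⟪gradient f (Q + t • x), x⟫ - d / t * f (Q + t • x)) ^ 2 ∂μH[k] =
      t ^ (c - k) *
        ∫ y in sphere Q t, (⟪gradient f y, t⁻¹ • (y - Q)⟫ - d / t * f y) ^ 2 ∂μH[k] := by
  rw [setIntegral_sphere_eq_rpow_mul hk Q ht, ← mul_assoc, ← Real.rpow_add ht, sub_add_cancel,
    ← integral_const_mul]
  simp only [add_sub_cancel_left, smul_smul, inv_mul_cancel₀ ht.ne', one_smul]

end Ray

lemma ContinuousOn.integrable_prod_restrict {X Y : Type*} [TopologicalSpace X] [MeasurableSpace X]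
    [T2Space X] [TopologicalSpace Y] [MeasurableSpace Y] [T2Space Y] [OpensMeasurableSpace (X × Y)]
    {μ : Measure X} {ν : Measure Y} {K : Set X} {L : Set Y} (hK : IsCompact K) (hL : IsCompact L)
    (hμK : μ K ≠ ∞) (hνL : ν L ≠ ∞) {g : X × Y → ℝ} (hg : ContinuousOn g (K ×ˢ L)) :
    Integrable g ((μ.restrict K).prod (ν.restrict L)) := by
  have : IsFiniteMeasure (μ.restrict K) := isFiniteMeasure_restrict.2 hμK
  have : IsFiniteMeasure (ν.restrict L) := isFiniteMeasure_restrict.2 hνL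
  have h := hg.integrableOn_compact (μ := (μ.restrict K).prod (ν.restrict L)) (hK.prod hL)
  rwa [IntegrableOn, ← Measure.prod_restrict, Measure.restrict_restrict_of_subset subset_rfl,
    Measure.restrict_restrict_of_subset subset_rfl] at h

theorem stmt_16_general (n : ℕ) (hn : 2 ≤ n) (d : ℝ) (γ : ℝ) (hγ : 0 < γ)
    (Q : E n) (f : E n → ℝ) (hf : ContDiff ℝ 1 f)
    (s r : ℝ) (hs : 0 < s) (hsr : s < r) :
    ∫ x in sphere (0 : E n) 1,
        (f (Q + r • x) / r ^ d - f (Q + s • x) / s ^ d) ^ 2 ∂μH[(n : ℝ) - 1] ≤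
      (r ^ γ - s ^ γ) / γ *
        ∫ t in Set.Ioc s r,
          t ^ (-γ - ((n : ℝ) - 2 + 2 * d)) *
            ∫ y in sphere Q t,
              (⟪gradient f y, t⁻¹ • (y - Q)⟫ - d / t * f y) ^ 2 ∂μH[(n : ℝ) - 1] := by
  have hdim : 0 ≤ (n : ℝ) - 1 := by
    rw [sub_nonneg, Nat.one_le_cast]; omega
  have hsphere := (hausdorffMeasure_sphere_lt_top (n := n) (by omega)).ne
  have : IsFiniteMeasure (μH[(n : ℝ) - 1].restrict (sphere (0 : E n) 1)) :=
    isFiniteMeasure_restrict.2 hsphere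
  set F : E n × ℝ → ℝ := fun p => p.2 ^ (1 - γ - 2 * d) *
    (⟪gradient f (Q + p.2 • p.1), p.1⟫ - d / p.2 * f (Q + p.2 • p.1)) ^ 2
  have hF : Integrable F
      ((μH[(n : ℝ) - 1].restrict (sphere 0 1)).prod (volume.restrict (Icc s r))) :=
    ContinuousOn.integrable_prod_restrict (isCompact_sphere 0 1) isCompact_Icc hsphere (by simp)
      ((continuousOn_rpow_mul_sq_radial hf Q _ d).mono fun p hp => (hs.trans_le hp.2.1).ne')
  calc _ ≤ ∫ x in sphere 0 1, ((r ^ γ - s ^ γ) / γ * ∫ t in Icc s r, F (x, t)) ∂μH[(n : ℝ) - 1] :=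
        integral_mono_of_nonneg (ae_of_all _ fun _ => sq_nonneg _)
          (hF.integral_prod_left.const_mul _)
          (ae_of_all _ fun x => sq_sub_comp_add_smul_div_rpow_le hf Q x d hγ hs hsr.le)
    _ = (r ^ γ - s ^ γ) / γ * ∫ t in Icc s r, (∫ x in sphere 0 1, F (x, t) ∂μH[(n : ℝ) - 1]) := by
        rw [integral_const_mul, integral_integral_swap hF]
    _ = _ := by
        rw [integral_Icc_eq_integral_Ioc]
        refine congrArg _ (setIntegral_congr_fun measurableSet_Ioc fun t ht => ?_)
        rw [setIntegral_unitSphere_rpow_mul_sq_radial hdim Q _ d (hs.trans ht.1)]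
        ring_nf

/-- Estimate (6.1)–(6.3) of the paper: the spherical `L²` distance between the blowups
`Y(t,x) = f(Q+tx)/t^d` at two scales is controlled by the weighted integral of
`(ν·∇f - (d/t) f)²` over intermediate spheres. -/
theorem stmt_16 (n : ℕ) (hn : 2 ≤ n) (d : ℝ) (hd : 0 < d) (γ : ℝ) (hγ : 0 < γ)
    (Q : E n) (f : E n → ℝ) (hf : ContDiff ℝ 1 f) (hfQ : f Q = 0)
    (s r : ℝ) (hs : 0 < s) (hsr : s < r) :
    ∫ x in sphere (0 : E n) 1,
        (f (Q + r • x) / r ^ d - f (Q + s • x) / s ^ d) ^ 2 ∂μH[(n : ℝ) - 1] ≤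
      (r ^ γ - s ^ γ) / γ *
        ∫ t in Set.Ioc s r,
          t ^ (-γ - ((n : ℝ) - 2 + 2 * d)) *
            ∫ y in sphere Q t,
              (⟪gradient f y, t⁻¹ • (y - Q)⟫ - d / t * f y) ^ 2 ∂μH[(n : ℝ) - 1] :=
  stmt_16_general n hn d γ hγ Q f hf s r hs hsr
end
end

section
/- Let n ≥ 2 and let p : ℝⁿ → ℝ be a homogeneous harmonic polynomial of degree d ≥ 2 such that both {p > 0} and {p < 0} are nonempty and connected. Then the dimension of the linear space {ζ ∈ ℝⁿ : ζ·∇p(x) = 0 for all x ∈ ℝⁿ} is at most n - 3. -/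
open MeasureTheory Metric Filter Set
open scoped ENNReal NNReal Topology RealInnerProductSpace

noncomputable section

lemma contDiff_mvpoly {n : ℕ} (P : MvPolynomial (Fin n) ℝ) :
    ContDiff ℝ (⊤ : ℕ∞) (fun x : E n => MvPolynomial.eval (fun i => x i) P) := by
  induction P using MvPolynomial.induction_on with
  | C a => simpa using contDiff_const (c := a)
  | add f g hf hg => simpa [MvPolynomial.eval_add] using hf.add hg
  | mul_X f i hf =>
      simp only [MvPolynomial.eval_mul, MvPolynomial.eval_X]
      exact hf.mul (EuclideanSpace.proj (𝕜 := ℝ) i).contDiff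

lemma euler_deriv {n : ℕ} {q : E n → ℝ} (hq : Differentiable ℝ q) {k : ℕ}
    (hk : ∀ t : ℝ, 0 < t → ∀ x, q (t • x) = t ^ k * q x) (x : E n) :
    fderiv ℝ q x x = k * q x := by
  have hG : HasDerivAt (fun t : ℝ => q (t • x)) (fderiv ℝ q ((1:ℝ) • x) x) 1 := by
    have h1 : HasDerivAt (fun t : ℝ => t • x) ((1:ℝ) • x) 1 :=
      (hasDerivAt_id (1:ℝ)).smul_const x
    have := (hq ((1:ℝ) • x)).hasFDerivAt.comp_hasDerivAt (f := fun t : ℝ => t • x) 1 h1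
    simpa [Function.comp_def] using this
  have h2 : HasDerivAt (fun t : ℝ => t ^ k * q x) ((k * 1 ^ (k - 1)) * q x) 1 :=
    (hasDerivAt_pow k 1).mul_const (q x)
  have heq : (fun t : ℝ => q (t • x)) =ᶠ[𝓝 (1:ℝ)] fun t => t ^ k * q x := by
    filter_upwards [isOpen_Ioi.mem_nhds (show (0:ℝ) < 1 by norm_num)] with t ht
    exact hk t ht x
  have h3 : HasDerivAt (fun t : ℝ => q (t • x)) ((k * 1 ^ (k - 1)) * q x) 1 :=
    h2.congr_of_eventuallyEq heq
  have := hG.unique h3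
  simpa using this

-- derivative in a fixed direction, as fderiv applied: rewriting lemma
lemma fderiv_dir {n : ℕ} {p : E n → ℝ} (hsm : ContDiff ℝ (⊤ : ℕ∞) p) (u : E n) (x v : E n) :
    fderiv ℝ (fun y => fderiv ℝ p y u) x v = fderiv ℝ (fderiv ℝ p) x v u := by
  have hD : DifferentiableAt ℝ (fderiv ℝ p) x :=
    ((hsm.fderiv_right (m := (⊤ : ℕ∞)) (mod_cast le_top)).differentiable (by simp)) x
  have := fderiv_clm_apply (c := fderiv ℝ p) (u := fun _ => u) hD (differentiableAt_const u)
  rw [show (fun y => fderiv ℝ p y u) = (fun y => (fderiv ℝ p y) ((fun _ => u) y)) from rfl, this]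
  simp

lemma dp_hom {n : ℕ} {p : E n → ℝ} {d : ℕ} (hd : 2 ≤ d) (hsm : ContDiff ℝ (⊤ : ℕ∞) p)
    (hhom : ∀ (t : ℝ), 0 < t → ∀ x, p (t • x) = t ^ d * p x) :
    ∀ (t : ℝ), 0 < t → ∀ x u, fderiv ℝ p (t • x) u = t ^ (d - 1) * fderiv ℝ p x u := by
  intro t ht x u
  have hdiff := hsm.differentiable (by simp)
  have h1 : HasFDerivAt (fun y : E n => p (t • y))
      ((fderiv ℝ p (t • x)).comp (t • ContinuousLinearMap.id ℝ (E n))) x := by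
    have hlin : HasFDerivAt (fun y : E n => t • y) (t • ContinuousLinearMap.id ℝ (E n)) x :=
      (t • ContinuousLinearMap.id ℝ (E n)).hasFDerivAt
    exact (hdiff (t • x)).hasFDerivAt.comp x hlin
  have h2 : HasFDerivAt (fun y : E n => t ^ d * p y) (t ^ d • fderiv ℝ p x) x :=
    (hdiff x).hasFDerivAt.const_mul (t ^ d)
  have hfe : (fun y : E n => p (t • y)) = fun y : E n => t ^ d * p y :=
    funext fun y => hhom t ht y
  rw [hfe] at h1
  have := h2.unique h1
  have happ := congrArg (fun (L : E n →L[ℝ] ℝ) => L u) this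
  simp only [ContinuousLinearMap.coe_comp', Function.comp_apply, ContinuousLinearMap.smul_apply,
    ContinuousLinearMap.coe_smul', Pi.smul_apply, ContinuousLinearMap.coe_id', id_eq,
    smul_eq_mul] at happ
  -- happ : t ^ d * fderiv ℝ p x u = fderiv ℝ p (t • x) (t • u)
  have hmap : fderiv ℝ p (t • x) (t • u) = t * fderiv ℝ p (t • x) u := by
    simp [smul_eq_mul]
  rw [hmap] at happ
  have htd : t ^ d = t * t ^ (d - 1) := by
    rw [← pow_succ']
    congr 1
    omega
  have ht' : t ≠ 0 := ne_of_gt ht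
  rw [htd, mul_assoc] at happ
  have := mul_left_cancel₀ ht' happ
  linarith [this]

lemma ode_cos {F F₁ : ℝ → ℝ} {c : ℝ} (hc : 0 < c)
    (hF : ∀ t, HasDerivAt F (F₁ t) t)
    (hF₁ : ∀ t, HasDerivAt F₁ (-(c ^ 2) * F t) t) :
    ∀ t, F t = F 0 * Real.cos (c * t) + (F₁ 0 / c) * Real.sin (c * t) := by
  have hc' : c ≠ 0 := ne_of_gt hc
  set A := F 0 with hA
  set B := F₁ 0 with hB
  have hcos : ∀ t : ℝ, HasDerivAt (fun s => Real.cos (c * s)) (-Real.sin (c * t) * c) t := by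
    intro t
    simpa [Function.comp_def] using (Real.hasDerivAt_cos (c * t)).comp t ((hasDerivAt_id t).const_mul c)
  have hsin : ∀ t : ℝ, HasDerivAt (fun s => Real.sin (c * s)) (Real.cos (c * t) * c) t := by
    intro t
    simpa [Function.comp_def] using (Real.hasDerivAt_sin (c * t)).comp t ((hasDerivAt_id t).const_mul c)
  set G : ℝ → ℝ := fun t => F t - (A * Real.cos (c * t) + (B / c) * Real.sin (c * t)) with hG
  set G₁ : ℝ → ℝ := fun t => F₁ t - (-(c * A) * Real.sin (c * t) + B * Real.cos (c * t)) with hG₁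
  have hGd : ∀ t, HasDerivAt G (G₁ t) t := by
    intro t
    have := (hF t).sub (((hcos t).const_mul A).add ((hsin t).const_mul (B / c)))
    refine this.congr_deriv ?_
    field_simp
    ring
  have hG₁d : ∀ t, HasDerivAt G₁ (-(c ^ 2) * G t) t := by
    intro t
    have := (hF₁ t).sub (((hsin t).const_mul (-(c * A))).add ((hcos t).const_mul B))
    refine this.congr_deriv ?_
    simp only [hG]
    field_simp
    ring
  set Egy : ℝ → ℝ := fun t => G₁ t ^ 2 + c ^ 2 * G t ^ 2 with hE
  have hEd : ∀ t, HasDerivAt Egy 0 t := by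
    intro t
    have := ((hG₁d t).pow 2).add (((hGd t).pow 2).const_mul (c ^ 2))
    refine this.congr_deriv ?_
    ring
  have hEconst : ∀ t, Egy t = Egy 0 := by
    intro t
    exact is_const_of_deriv_eq_zero (fun s => (hEd s).differentiableAt)
      (fun s => (hEd s).deriv) t 0
  have hG0 : G 0 = 0 := by simp [hG, hA]
  have hG₁0 : G₁ 0 = 0 := by simp [hG₁, hB]
  have hE0 : Egy 0 = 0 := by simp [hE, hG0, hG₁0]
  intro t
  have ht := hEconst t
  rw [hE0] at ht
  simp only [hE] at ht
  have hGt : G t = 0 := by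
    have h1 : 0 ≤ G₁ t ^ 2 := sq_nonneg _
    have h2 : 0 ≤ G t ^ 2 := sq_nonneg _
    have hc2 : 0 < c ^ 2 := by positivity
    have : c ^ 2 * G t ^ 2 = 0 := by nlinarith
    have : G t ^ 2 = 0 := by
      rcases mul_eq_zero.1 this with h | h
      · exact absurd h (ne_of_gt hc2)
      · exact h
    exact pow_eq_zero_iff (by norm_num) |>.1 this
  have := hGt
  simp only [hG] at this
  linarith [this]


set_option maxHeartbeats 2000000 in
lemma key {n d : ℕ} (hd : 2 ≤ d) {p : E n → ℝ}
    (hsm : ContDiff ℝ (⊤ : ℕ∞) p)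
    (hharm : ∀ x, lap n p x = 0)
    (hhom : ∀ (t : ℝ), 0 < t → ∀ x, p (t • x) = t ^ d * p x)
    (hpos : IsConnected {x : E n | 0 < p x})
    {e₁ e₂ : E n} (h11 : ⟪e₁, e₁⟫ = 1) (h22 : ⟪e₂, e₂⟫ = 1) (h12 : ⟪e₁, e₂⟫ = 0)
    (hdir : ∀ x u, ⟪e₁, u⟫ = 0 → ⟪e₂, u⟫ = 0 → fderiv ℝ p x u = 0) : False := by
  have hdiff : Differentiable ℝ p := hsm.differentiable (by simp)
  have hDdiff : Differentiable ℝ (fderiv ℝ p) :=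
    (hsm.fderiv_right (m := (⊤ : ℕ∞)) (mod_cast le_top)).differentiable (by simp)
  set D2 : E n → E n →L[ℝ] E n →L[ℝ] ℝ := fun x => fderiv ℝ (fderiv ℝ p) x with hD2def
  have hsymm : ∀ x v w, D2 x v w = D2 x w v := fun x v w =>
    second_derivative_symmetric (fun y => (hdiff y).hasFDerivAt) ((hDdiff x).hasFDerivAt) v w
  have hzero : ∀ x u ζ, ⟪e₁, ζ⟫ = 0 → ⟪e₂, ζ⟫ = 0 → D2 x u ζ = 0 := by
    intro x u ζ hz1 hz2
    have h0 : (fun y => fderiv ℝ p y ζ) = fun _ => (0 : ℝ) :=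
      funext fun y => hdir y ζ hz1 hz2
    have h1 := fderiv_dir hsm ζ x u
    rw [h0] at h1
    simpa using h1.symm
  have hzero' : ∀ x u ζ, ⟪e₁, ζ⟫ = 0 → ⟪e₂, ζ⟫ = 0 → D2 x ζ u = 0 := by
    intro x u ζ hz1 hz2
    rw [hsymm]
    exact hzero x u ζ hz1 hz2
  have hlap : ∀ x, (∑ i : Fin n,
      D2 x (EuclideanSpace.single i 1) (EuclideanSpace.single i 1)) = 0 := by
    intro x
    have h := hharm x
    unfold lap at h
    simp only [fderiv_dir hsm] at h
    exact h
  -- trace invariance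
  have htrace : ∀ (x γ δ : E n), ⟪γ, γ⟫ = 1 → ⟪δ, δ⟫ = 1 → ⟪γ, δ⟫ = 0 →
      (∀ ζ, ⟪γ, ζ⟫ = 0 → ⟪δ, ζ⟫ = 0 → ⟪e₁, ζ⟫ = 0 ∧ ⟪e₂, ζ⟫ = 0) →
      D2 x γ γ + D2 x δ δ = 0 := by
    intro x γ δ hgg hdd hgd hperp
    have hdg : ⟪δ, γ⟫ = 0 := by rw [real_inner_comm]; exact hgd
    set ζ : Fin n → E n :=
      fun i => EuclideanSpace.single i 1 - γ i • γ - δ i • δ with hζ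
    have hγζ : ∀ i, ⟪γ, ζ i⟫ = 0 := by
      intro i
      simp only [hζ, inner_sub_right, real_inner_smul_right, hgg, hgd]
      have : ⟪γ, (EuclideanSpace.single i 1 : E n)⟫ = γ i := by
        rw [EuclideanSpace.inner_single_right]
        simp
      rw [this]; ring
    have hδζ : ∀ i, ⟪δ, ζ i⟫ = 0 := by
      intro i
      simp only [hζ, inner_sub_right, real_inner_smul_right, hdd, hdg]
      have : ⟪δ, (EuclideanSpace.single i 1 : E n)⟫ = δ i := by
        rw [EuclideanSpace.inner_single_right]
        simp
      rw [this]; ring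
    have hz : ∀ i u, D2 x u (ζ i) = 0 := fun i u =>
      hzero x u (ζ i) (hperp (ζ i) (hγζ i) (hδζ i)).1 (hperp (ζ i) (hγζ i) (hδζ i)).2
    have hz' : ∀ i u, D2 x (ζ i) u = 0 := fun i u =>
      (hsymm x (ζ i) u).trans (hz i u)
    have hsingle : ∀ i, (EuclideanSpace.single i 1 : E n) = γ i • γ + δ i • δ + ζ i := by
      intro i
      simp only [hζ]
      abel
    have hexp : ∀ i, D2 x (EuclideanSpace.single i 1) (EuclideanSpace.single i 1)
        = (γ i * γ i) * D2 x γ γ + (γ i * δ i) * D2 x γ δ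
          + (δ i * γ i) * D2 x δ γ + (δ i * δ i) * D2 x δ δ := by
      intro i
      rw [hsingle i]
      simp only [map_add, _root_.map_smul, ContinuousLinearMap.add_apply,
        ContinuousLinearMap.smul_apply, smul_eq_mul, hz, hz']
      ring
    have hsum := hlap x
    rw [Finset.sum_congr rfl (fun i _ => hexp i)] at hsum
    simp only [Finset.sum_add_distrib, ← Finset.sum_mul] at hsum
    have e1 : ∑ i : Fin n, γ i * γ i = 1 := by
      have h := hgg
      rw [PiLp.inner_apply] at h
      simpa [sq] using h
    have e2 : ∑ i : Fin n, δ i * δ i = 1 := by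
      have h := hdd
      rw [PiLp.inner_apply] at h
      simpa [sq] using h
    have e3 : ∑ i : Fin n, γ i * δ i = 0 := by
      have h := hgd
      rw [PiLp.inner_apply] at h
      simpa [mul_comm] using h
    have e4 : ∑ i : Fin n, δ i * γ i = 0 := by
      have h := hdg
      rw [PiLp.inner_apply] at h
      simpa [mul_comm] using h
    rw [e1, e2, e3, e4] at hsum
    linarith [hsum]
  -- Euler identities
  have heuler1 : ∀ x, fderiv ℝ p x x = d * p x := fun x => euler_deriv hdiff hhom x
  have heuler2 : ∀ x u, D2 x x u = ((d : ℝ) - 1) * fderiv ℝ p x u := by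
    intro x u
    have hqd : Differentiable ℝ (fun y => fderiv ℝ p y u) :=
      hDdiff.clm_apply (differentiable_const u)
    have hqh : ∀ t : ℝ, 0 < t → ∀ y, (fun y => fderiv ℝ p y u) (t • y)
        = t ^ (d - 1) * (fun y => fderiv ℝ p y u) y := by
      intro t ht y
      exact dp_hom hd hsm hhom t ht y u
    have h := euler_deriv hqd hqh x
    rw [fderiv_dir hsm u x x] at h
    rw [h, Nat.cast_sub (by omega : 1 ≤ d)]
    norm_num
  -- basic scalars
  have hd2' : (2:ℝ) ≤ (d:ℝ) := by exact_mod_cast hd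
  have hd0 : (0:ℝ) < (d:ℝ) := by linarith
  have hdne : (d:ℝ) ≠ 0 := ne_of_gt hd0
  have h21 : ⟪e₂, e₁⟫ = 0 := by rw [real_inner_comm]; exact h12
  have hIP : ∀ a b c e : ℝ, ⟪a • e₁ + b • e₂, c • e₁ + e • e₂⟫ = a * c + b * e := by
    intro a b c e
    simp only [inner_add_left, inner_add_right, real_inner_smul_left, real_inner_smul_right,
      h11, h22, h12, h21]
    ring
  -- the circle curve
  set γfun : ℝ → E n := fun t => Real.cos t • e₁ + Real.sin t • e₂ with hγdef
  set δfun : ℝ → E n := fun t => (-Real.sin t) • e₁ + Real.cos t • e₂ with hδdef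
  have hγd : ∀ t, HasDerivAt γfun (δfun t) t := by
    intro t
    exact ((Real.hasDerivAt_cos t).smul_const e₁).add ((Real.hasDerivAt_sin t).smul_const e₂)
  have hδd : ∀ t, HasDerivAt δfun (-γfun t) t := by
    intro t
    have h := (((Real.hasDerivAt_sin t).neg).smul_const e₁).add
      ((Real.hasDerivAt_cos t).smul_const e₂)
    refine h.congr_deriv ?_
    rw [hγdef]
    module
  have hggt : ∀ t, ⟪γfun t, γfun t⟫ = 1 := by
    intro t
    rw [hγdef]
    simp only []
    rw [hIP]
    linear_combination Real.sin_sq_add_cos_sq t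
  have hddt : ∀ t, ⟪δfun t, δfun t⟫ = 1 := by
    intro t
    rw [hδdef]
    simp only []
    rw [hIP]
    linear_combination Real.sin_sq_add_cos_sq t
  have hgdt : ∀ t, ⟪γfun t, δfun t⟫ = 0 := by
    intro t
    rw [hγdef, hδdef]
    simp only []
    rw [hIP]
    ring
  have hperpt : ∀ t ζ, ⟪γfun t, ζ⟫ = 0 → ⟪δfun t, ζ⟫ = 0 → ⟪e₁, ζ⟫ = 0 ∧ ⟪e₂, ζ⟫ = 0 := by
    intro t ζ hg hdl
    have hp : Real.cos t * Real.cos t + Real.sin t * Real.sin t = 1 := by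
      linear_combination Real.sin_sq_add_cos_sq t
    have he₁ : Real.cos t • γfun t - Real.sin t • δfun t = e₁ := by
      have h' : Real.cos t • γfun t - Real.sin t • δfun t
          = (Real.cos t * Real.cos t + Real.sin t * Real.sin t) • e₁ + (0:ℝ) • e₂ := by
        rw [hγdef, hδdef]
        module
      rw [h', hp, one_smul, zero_smul, add_zero]
    have he₂ : Real.sin t • γfun t + Real.cos t • δfun t = e₂ := by
      have h' : Real.sin t • γfun t + Real.cos t • δfun t
          = (0:ℝ) • e₁ + (Real.cos t * Real.cos t + Real.sin t * Real.sin t) • e₂ := by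
        rw [hγdef, hδdef]
        module
      rw [h', hp, one_smul, zero_smul, zero_add]
    constructor
    · rw [← he₁, inner_sub_left, real_inner_smul_left, real_inner_smul_left, hg, hdl]
      ring
    · rw [← he₂, inner_add_left, real_inner_smul_left, real_inner_smul_left, hg, hdl]
      ring
  -- the restriction to the circle and its second-order ODE
  set F : ℝ → ℝ := fun t => p (γfun t) with hFdef
  set F₁ : ℝ → ℝ := fun t => fderiv ℝ p (γfun t) (δfun t) with hF₁def
  have hFd : ∀ t, HasDerivAt F (F₁ t) t := by
    intro t
    exact (hdiff (γfun t)).hasFDerivAt.comp_hasDerivAt t (hγd t)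
  have hode : ∀ t, HasDerivAt F₁ (-((d:ℝ) ^ 2) * F t) t := by
    intro t
    have hc : HasDerivAt (fun s => fderiv ℝ p (γfun s)) (D2 (γfun t) (δfun t)) t :=
      (hDdiff (γfun t)).hasFDerivAt.comp_hasDerivAt t (hγd t)
    have h := hc.clm_apply (hδd t)
    refine h.congr_deriv ?_
    have htr := htrace (γfun t) (γfun t) (δfun t) (hggt t) (hddt t) (hgdt t) (hperpt t)
    have hγγ : D2 (γfun t) (γfun t) (γfun t) = (d:ℝ) * ((d:ℝ) - 1) * p (γfun t) := by
      rw [heuler2, heuler1]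
      ring
    have hneg : fderiv ℝ p (γfun t) (-(γfun t)) = -((d:ℝ) * p (γfun t)) := by
      rw [map_neg, heuler1]
    have hδδ : D2 (γfun t) (δfun t) (δfun t) = -((d:ℝ) * ((d:ℝ) - 1) * p (γfun t)) := by
      linarith [htr, hγγ]
    have hFt : F t = p (γfun t) := rfl
    rw [hδδ, hneg, hFt]
    ring
  have hFform := ode_cos hd0 hFd hode
  -- p vanishes at the origin
  have hp0 : p 0 = 0 := by
    have h2 := hhom 2 (by norm_num) 0
    rw [smul_zero] at h2
    have h4 : (4:ℝ) ≤ 2 ^ d := by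
      calc (4:ℝ) = 2 ^ 2 := by norm_num
      _ ≤ 2 ^ d := pow_le_pow_right₀ (by norm_num) hd
    have h5 : (1 - (2:ℝ) ^ d) * p 0 = 0 := by linear_combination h2
    rcases mul_eq_zero.1 h5 with h | h
    · linarith
    · exact h
  -- p only depends on the projection to the plane of e₁, e₂
  have hconst : ∀ (x ζ : E n), ⟪e₁, ζ⟫ = 0 → ⟪e₂, ζ⟫ = 0 → p (x + ζ) = p x := by
    intro x ζ hz1 hz2
    have hg : ∀ t : ℝ, HasDerivAt (fun s : ℝ => p (x + s • ζ)) 0 t := by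
      intro t
      have hl : HasDerivAt (fun s : ℝ => x + s • ζ) ζ t := by
        simpa using ((hasDerivAt_id t).smul_const ζ).const_add x
      have h := (hdiff (x + t • ζ)).hasFDerivAt.comp_hasDerivAt t hl
      simpa [hdir _ _ hz1 hz2, Function.comp_def] using h
    have h := is_const_of_deriv_eq_zero (fun t => (hg t).differentiableAt)
      (fun t => (hg t).deriv) 1 0
    simpa using h
  have hproj : ∀ x : E n, p x = p (⟪e₁, x⟫ • e₁ + ⟪e₂, x⟫ • e₂) := by
    intro x
    set w : E n := ⟪e₁, x⟫ • e₁ + ⟪e₂, x⟫ • e₂ with hw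
    have hx : x = w + (x - w) := by abel
    have hz1 : ⟪e₁, x - w⟫ = 0 := by
      rw [hw]
      simp only [inner_sub_right, inner_add_right, real_inner_smul_right, h11, h12]
      ring
    have hz2 : ⟪e₂, x - w⟫ = 0 := by
      rw [hw]
      simp only [inner_sub_right, inner_add_right, real_inner_smul_right, h22, h21]
      ring
    calc p x = p (w + (x - w)) := by rw [← hx]
    _ = p w := hconst w (x - w) hz1 hz2
  -- find a point on the circle where F is positive
  obtain ⟨x₀, hx₀⟩ := hpos.nonempty
  have hx₀' : 0 < p x₀ := hx₀
  set a : ℝ := ⟪e₁, x₀⟫ with ha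
  set b : ℝ := ⟪e₂, x₀⟫ with hb
  have hab : ¬(a = 0 ∧ b = 0) := by
    rintro ⟨h1, h2⟩
    have := hproj x₀
    rw [← ha, ← hb, h1, h2] at this
    simp only [zero_smul, add_zero, hp0] at this
    linarith
  have hzne : ((⟨a, b⟩ : ℂ)) ≠ 0 := by
    intro h
    rw [Complex.ext_iff] at h
    exact hab ⟨h.1, h.2⟩
  set r : ℝ := ‖(⟨a, b⟩ : ℂ)‖ with hr
  have hrpos : 0 < r := by
    rw [hr]
    exact norm_pos_iff.2 hzne
  set t₀ : ℝ := Complex.arg ⟨a, b⟩ with ht₀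
  have hA : a = r * Real.cos t₀ := by
    rw [ht₀, Complex.cos_arg hzne, hr]
    field_simp
  have hB : b = r * Real.sin t₀ := by
    rw [ht₀, Complex.sin_arg, hr]
    field_simp
  have hFt₀ : 0 < F t₀ := by
    have h1 : p x₀ = p (r • γfun t₀) := by
      rw [hproj x₀, ← ha, ← hb, hA, hB, hγdef]
      congr 1
      simp only [smul_add, smul_smul]
    have h2 : p (r • γfun t₀) = r ^ d * F t₀ := hhom r hrpos (γfun t₀)
    have h3 : 0 < r ^ d := pow_pos hrpos d
    nlinarith [hx₀', h1, h2, h3]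
  -- amplitude-phase form
  set A : ℝ := F 0 with hAdef
  set B : ℝ := F₁ 0 / (d:ℝ) with hBdef
  have hzcne : ((⟨A, B⟩ : ℂ)) ≠ 0 := by
    intro h
    have hA0 : A = 0 := by simpa using congrArg Complex.re h
    have hB0 : B = 0 := by simpa using congrArg Complex.im h
    have hF0 : F t₀ = 0 := by
      rw [hFform t₀, hA0, hB0]
      ring
    linarith [hF0, hFt₀]
  set R : ℝ := ‖(⟨A, B⟩ : ℂ)‖ with hRdef
  have hRpos : 0 < R := norm_pos_iff.2 hzcne
  set ψ : ℝ := Complex.arg ⟨A, B⟩ with hψ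
  have hAR : A = R * Real.cos ψ := by
    rw [hψ, Complex.cos_arg hzcne, hRdef]
    field_simp
  have hBR : B = R * Real.sin ψ := by
    rw [hψ, Complex.sin_arg, hRdef]
    field_simp
  have hFR : ∀ t, F t = R * Real.cos ((d:ℝ) * t - ψ) := by
    intro t
    rw [hFform t, hAR, hBR, Real.cos_sub]
    ring
  -- the three special angles
  set t₁ : ℝ := ψ / d with ht₁
  set t₂ : ℝ := (ψ + 2 * Real.pi) / d with ht₂
  set ts : ℝ := (ψ + Real.pi / 2) / d with hts
  have hv₁ : F t₁ = R := by
    rw [hFR t₁, ht₁]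
    have : (d:ℝ) * (ψ / d) - ψ = 0 := by field_simp; ring
    rw [this, Real.cos_zero, mul_one]
  have hv₂ : F t₂ = R := by
    rw [hFR t₂, ht₂]
    have : (d:ℝ) * ((ψ + 2 * Real.pi) / d) - ψ = 2 * Real.pi := by field_simp; ring
    rw [this, Real.cos_two_pi, mul_one]
  have hvs : F ts = 0 := by
    rw [hFR ts, hts]
    have : (d:ℝ) * ((ψ + Real.pi / 2) / d) - ψ = Real.pi / 2 := by field_simp; ring
    rw [this, Real.cos_pi_div_two, mul_zero]
  have hvsπ : F (ts + Real.pi) = 0 := by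
    rw [hFR (ts + Real.pi), hts]
    have h' : (d:ℝ) * ((ψ + Real.pi / 2) / d + Real.pi) - ψ = (d:ℝ) * Real.pi + Real.pi / 2 := by
      field_simp
      ring
    rw [h', Real.cos_add_pi_div_two, Real.sin_nat_mul_pi, neg_zero, mul_zero]
  -- p vanishes on the whole line through γfun ts
  have hγπ : ∀ t : ℝ, γfun (t + Real.pi) = -γfun t := by
    intro t
    rw [hγdef]
    simp only [Real.cos_add_pi, Real.sin_add_pi]
    module
  have hline : ∀ s : ℝ, p (s • γfun ts) = 0 := by
    intro s
    rcases lt_trichotomy s 0 with hs | hs | hs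
    · have hrw : s • γfun ts = (-s) • γfun (ts + Real.pi) := by
        rw [hγπ ts]
        module
      rw [hrw, hhom (-s) (by linarith) (γfun (ts + Real.pi))]
      have : p (γfun (ts + Real.pi)) = F (ts + Real.pi) := rfl
      rw [this, hvsπ, mul_zero]
    · rw [hs, zero_smul, hp0]
    · rw [hhom s hs (γfun ts)]
      have : p (γfun ts) = F ts := rfl
      rw [this, hvs, mul_zero]
  -- evaluation of the separating linear functional on circle points
  have hval : ∀ t s : ℝ, ⟪γfun t, δfun s⟫ = Real.sin (t - s) := by
    intro t s
    rw [hγdef, hδdef]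
    simp only []
    rw [hIP, Real.sin_sub]
    ring
  have hsep₁ : ⟪γfun t₁, δfun ts⟫ < 0 := by
    rw [hval]
    have h' : t₁ - ts = -(Real.pi / (2 * d)) := by
      rw [ht₁, hts]
      field_simp
      ring
    rw [h', Real.sin_neg]
    have hposx : 0 < Real.pi / (2 * d) := by positivity
    have hltx : Real.pi / (2 * d) < Real.pi := by
      rw [div_lt_iff₀ (by linarith)]
      nlinarith [Real.pi_pos]
    have := Real.sin_pos_of_pos_of_lt_pi hposx hltx
    linarith
  have hsep₂ : 0 < ⟪γfun t₂, δfun ts⟫ := by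
    rw [hval]
    have h' : t₂ - ts = 3 * Real.pi / (2 * d) := by
      rw [ht₂, hts]
      field_simp
      ring
    rw [h']
    apply Real.sin_pos_of_pos_of_lt_pi
    · positivity
    · rw [div_lt_iff₀ (by linarith)]
      nlinarith [Real.pi_pos]
  -- membership of the two circle points in the positive set
  have hmem₁ : γfun t₁ ∈ {x : E n | 0 < p x} := by
    have : p (γfun t₁) = F t₁ := rfl
    simp only [Set.mem_setOf_eq, this, hv₁]
    exact hRpos
  have hmem₂ : γfun t₂ ∈ {x : E n | 0 < p x} := by
    have : p (γfun t₂) = F t₂ := rfl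
    simp only [Set.mem_setOf_eq, this, hv₂]
    exact hRpos
  -- the functional never vanishes on the positive set
  have hnz : ∀ x : E n, 0 < p x → ⟪x, δfun ts⟫ ≠ 0 := by
    intro x hx hc0
    set a' : ℝ := ⟪e₁, x⟫ with ha'
    set b' : ℝ := ⟪e₂, x⟫ with hb'
    have hrepr : -Real.sin ts * a' + Real.cos ts * b' = 0 := by
      rw [← hc0, hδdef]
      simp only [inner_add_right, real_inner_smul_right]
      rw [ha', hb', real_inner_comm e₁ x, real_inner_comm e₂ x]
    set s' : ℝ := a' * Real.cos ts + b' * Real.sin ts with hs'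
    have pyth := Real.sin_sq_add_cos_sq ts
    have haa : a' = s' * Real.cos ts := by
      rw [hs']
      linear_combination (-Real.sin ts) * hrepr - a' * pyth
    have hbb : b' = s' * Real.sin ts := by
      rw [hs']
      linear_combination (Real.cos ts) * hrepr - b' * pyth
    have hxval : p x = p (s' • γfun ts) := by
      rw [hproj x, ← ha', ← hb', haa, hbb, hγdef]
      congr 1
      simp only [smul_add, smul_smul]
    rw [hxval, hline s'] at hx
    exact lt_irrefl 0 hx
  -- intermediate value theorem on the connected positive set
  have hcont : Continuous fun x : E n => ⟪x, δfun ts⟫ :=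
    continuous_id.inner continuous_const
  have himg : IsPreconnected ((fun x : E n => ⟪x, δfun ts⟫) '' {x : E n | 0 < p x}) :=
    hpos.isPreconnected.image _ hcont.continuousOn
  have h0mem : (0:ℝ) ∈ (fun x : E n => ⟪x, δfun ts⟫) '' {x : E n | 0 < p x} := by
    have hm₁ := Set.mem_image_of_mem (fun x : E n => ⟪x, δfun ts⟫) hmem₁
    have hm₂ := Set.mem_image_of_mem (fun x : E n => ⟪x, δfun ts⟫) hmem₂
    exact himg.ordConnected.out hm₁ hm₂ ⟨le_of_lt hsep₁, le_of_lt hsep₂⟩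
  obtain ⟨x, hxS, hx0⟩ := h0mem
  exact hnz x hxS hx0
lemma exists_pair {n : ℕ} (hn : 2 ≤ n) (V : Submodule ℝ (E n))
    (hV : Module.finrank ℝ V ≤ 2) :
    ∃ e₁ e₂ : E n, ⟪e₁, e₁⟫ = 1 ∧ ⟪e₂, e₂⟫ = 1 ∧ ⟪e₁, e₂⟫ = 0 ∧
      ∀ v ∈ V, ∀ ζ : E n, ⟪e₁, ζ⟫ = 0 → ⟪e₂, ζ⟫ = 0 → ⟪v, ζ⟫ = 0 := by
  interval_cases hk : Module.finrank ℝ V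
  · -- finrank V = 0
    have hbot : V = ⊥ := Submodule.finrank_eq_zero.1 hk
    refine ⟨EuclideanSpace.single ⟨0, by omega⟩ 1, EuclideanSpace.single ⟨1, by omega⟩ 1,
      ?_, ?_, ?_, ?_⟩
    · rw [EuclideanSpace.inner_single_left]
      simp [EuclideanSpace.single_apply]
    · rw [EuclideanSpace.inner_single_left]
      simp [EuclideanSpace.single_apply]
    · rw [EuclideanSpace.inner_single_left]
      simp [EuclideanSpace.single_apply, Fin.ext_iff]
    · intro v hv ζ _ _
      rw [hbot] at hv
      simp only [Submodule.mem_bot] at hv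
      rw [hv, inner_zero_left]
  · -- finrank V = 1
    set b := (stdOrthonormalBasis ℝ V).reindex (finCongr hk) with hbdef
    set e₁ : E n := (b 0 : E n) with he₁
    have h11 : ⟪e₁, e₁⟫ = 1 := by
      rw [he₁, ← Submodule.coe_inner]
      have hON := b.orthonormal
      rw [orthonormal_iff_ite] at hON
      simpa using hON 0 0
    -- find a unit vector orthogonal to V
    have hVne : Vᗮ ≠ ⊥ := by
      intro hB
      have h1 := Submodule.finrank_add_finrank_orthogonal (K := V)
      rw [hB, finrank_bot, finrank_euclideanSpace_fin, hk] at h1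
      omega
    obtain ⟨w, hwV, hw0⟩ := Submodule.exists_mem_ne_zero_of_ne_bot hVne
    have hwn : ‖w‖ ≠ 0 := norm_ne_zero_iff.2 hw0
    set e₂ : E n := ‖w‖⁻¹ • w with he₂
    have h22 : ⟪e₂, e₂⟫ = 1 := by
      rw [he₂, real_inner_smul_left, real_inner_smul_right, real_inner_self_eq_norm_sq]
      field_simp
    have horth : ∀ u ∈ V, ⟪u, w⟫ = 0 := fun u hu =>
      (Submodule.mem_orthogonal V w).1 hwV u hu
    have h12 : ⟪e₁, e₂⟫ = 0 := by
      rw [he₂, real_inner_smul_right, horth e₁ (SetLike.coe_mem (b 0)), mul_zero]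
    refine ⟨e₁, e₂, h11, h22, h12, ?_⟩
    intro v hv ζ h1 h2
    have hsum := b.sum_repr ⟨v, hv⟩
    have hv' : v = (b.repr ⟨v, hv⟩ 0) • e₁ := by
      rw [Fin.sum_univ_one] at hsum
      have h2 := congrArg (Subtype.val : V → E n) hsum
      simp only [Submodule.coe_smul] at h2
      exact h2.symm
    rw [hv', real_inner_smul_left, h1, mul_zero]
  · -- finrank V = 2
    set b := (stdOrthonormalBasis ℝ V).reindex (finCongr hk) with hbdef
    set e₁ : E n := (b 0 : E n) with he₁
    set e₂ : E n := (b 1 : E n) with he₂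
    have hON := b.orthonormal
    rw [orthonormal_iff_ite] at hON
    have h11 : ⟪e₁, e₁⟫ = 1 := by
      rw [he₁, ← Submodule.coe_inner]
      simpa using hON 0 0
    have h22 : ⟪e₂, e₂⟫ = 1 := by
      rw [he₂, ← Submodule.coe_inner]
      simpa using hON 1 1
    have h12 : ⟪e₁, e₂⟫ = 0 := by
      rw [he₁, he₂, ← Submodule.coe_inner]
      simpa using hON 0 1
    refine ⟨e₁, e₂, h11, h22, h12, ?_⟩
    intro v hv ζ h1 h2
    have hsum := b.sum_repr ⟨v, hv⟩
    have hv' : v = (b.repr ⟨v, hv⟩ 0) • e₁ + (b.repr ⟨v, hv⟩ 1) • e₂ := by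
      rw [Fin.sum_univ_two] at hsum
      have h2 := congrArg (Subtype.val : V → E n) hsum
      simp only [Submodule.coe_add, Submodule.coe_smul] at h2
      exact h2.symm
    rw [hv', inner_add_left, real_inner_smul_left, real_inner_smul_left, h1, h2]
    ring


/-- The space of directions in which a homogeneous harmonic polynomial `p` of degree
`d ≥ 2` with connected positive and negative sets is translation invariant (equivalently,
the orthogonal complement of the span of the range of `∇p`) has dimension at most `n-3`. -/
theorem stmt_18 (n : ℕ) (hn : 2 ≤ n) (d : ℕ) (hd : 2 ≤ d)
    (p : E n → ℝ)
    (hpoly : ∃ P : MvPolynomial (Fin n) ℝ,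
      ∀ x : E n, p x = MvPolynomial.eval (fun i => x i) P)
    (hharm : ∀ x, lap n p x = 0)
    (hhom : ∀ (t : ℝ), 0 < t → ∀ x, p (t • x) = t ^ d * p x)
    (hpos : IsConnected {x : E n | 0 < p x})
    (hneg : IsConnected {x : E n | p x < 0}) :
    Module.finrank ℝ (Submodule.span ℝ (Set.range fun x => gradient p x))ᗮ ≤ n - 3 := by
  classical
  obtain ⟨P, hP⟩ := hpoly
  have hpfun : p = fun x => MvPolynomial.eval (fun i => x i) P := funext hP
  have hsm : ContDiff ℝ (⊤ : ℕ∞) p := by rw [hpfun]; exact contDiff_mvpoly P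
  by_contra hcon
  push_neg at hcon
  set V := Submodule.span ℝ (Set.range fun x => gradient p x) with hVdef
  have hfin : Module.finrank ℝ V + Module.finrank ℝ Vᗮ = n := by
    have h := Submodule.finrank_add_finrank_orthogonal (K := V)
    rwa [finrank_euclideanSpace_fin] at h
  have hV2 : Module.finrank ℝ V ≤ 2 := by omega
  obtain ⟨e₁, e₂, h11, h22, h12, hperp⟩ := exists_pair hn V hV2
  apply key hd hsm hharm hhom hpos h11 h22 h12
  intro x u h1 h2
  have hmem : gradient p x ∈ V := by
    rw [hVdef]
    exact Submodule.subset_span ⟨x, rfl⟩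
  have hval := hperp _ hmem u h1 h2
  rw [← InnerProductSpace.toDual_symm_apply]
  exact hval
end
end

section
/- Let N : (0, r₀] → ℝ and suppose: (a) N(0) := lim_{r↓0} N(r) exists; (b) there are constants k > 0 and α ∈ (0,1) such that for every R ∈ (0, r₀] and every r ∈ (R/4, R), N(R) - N(r) ≥ -k R^{α-1} (R - r). Then there is a constant C = C(k, α) > 0 such that N(r) - N(0) ≥ -C r^{α} for all r ∈ (0, r₀]. -/
open MeasureTheory Metric Filter Set
open scoped ENNReal NNReal Topology RealInnerProductSpace

noncomputable section

/-! Halving the scale costs at most `k R^{α-1} (R - R/2) = (k/2) R^α`; along the scales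
`r 2^{-n}` these costs form a geometric series of ratio `2^{-α} < 1`, whose sum `C r^α`
survives the limit `n → ∞`. -/

theorem le_add_div_one_sub_of_le_add_geometric {u : ℕ → ℝ} {a c : ℝ} (ha : 0 ≤ a)
    (hc₀ : 0 ≤ c) (hc₁ : c < 1) (h : ∀ n, u (n + 1) ≤ u n + a * c ^ n) (n : ℕ) :
    u n ≤ u 0 + a / (1 - c) := by
  calc u n = u 0 + ∑ i ∈ Finset.range n, (u (i + 1) - u i) := by
        rw [Finset.sum_range_sub]; ring
    _ ≤ u 0 + ∑ i ∈ Finset.range n, a * c ^ i := by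
        gcongr with i; linarith [h i]
    _ = u 0 + a * ∑ i ∈ Finset.range n, c ^ i := by rw [Finset.mul_sum]
    _ ≤ u 0 + a * (1 / (1 - c)) := by
        gcongr; simpa using geom_sum_Ico_le_of_lt_one (m := 0) (n := n) hc₀ hc₁
    _ = u 0 + a / (1 - c) := by rw [mul_one_div]

theorem le_add_div_one_sub_of_tendsto_of_le_add_geometric {u : ℕ → ℝ} {a c L : ℝ}
    (ha : 0 ≤ a) (hc₀ : 0 ≤ c) (hc₁ : c < 1) (h : ∀ n, u (n + 1) ≤ u n + a * c ^ n)
    (hu : Tendsto u atTop (𝓝 L)) :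
    L ≤ u 0 + a / (1 - c) :=
  le_of_tendsto' hu (le_add_div_one_sub_of_le_add_geometric ha hc₀ hc₁ h)

theorem le_add_of_almost_monotone_of_half {N : ℝ → ℝ} {r₀ k α R : ℝ}
    (hb : ∀ R ∈ Set.Ioc (0 : ℝ) r₀, ∀ r ∈ Set.Ioo (R / 4) R,
      N R - N r ≥ -(k * R ^ (α - 1) * (R - r)))
    (hR : R ∈ Set.Ioc 0 r₀) :
    N (R / 2) ≤ N R + k / 2 * R ^ α := by
  have hR₀ := hR.1
  have hcost : k * R ^ (α - 1) * (R - R / 2) = k / 2 * R ^ α := by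
    rw [Real.rpow_sub_one hR₀.ne']
    field_simp
    ring
  linarith [hb R hR (R / 2) ⟨by linarith, by linarith⟩]

theorem mul_inv_two_pow_rpow {r : ℝ} (hr : 0 ≤ r) (α : ℝ) (n : ℕ) :
    (r * 2⁻¹ ^ n) ^ α = r ^ α * (2⁻¹ ^ α) ^ n := by
  rw [Real.mul_rpow hr (by positivity), Real.rpow_pow_comm (by norm_num)]

theorem tendsto_mul_inv_two_pow_nhdsGT_zero {r : ℝ} (hr : 0 < r) :
    Tendsto (fun n : ℕ => r * 2⁻¹ ^ n) atTop (𝓝[>] 0) := by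
  refine tendsto_nhdsWithin_iff.2 ⟨?_, .of_forall fun n => mem_Ioi.2 (by positivity)⟩
  simpa using (tendsto_pow_atTop_nhds_zero_of_lt_one (r := (2⁻¹ : ℝ))
    (by norm_num) (by norm_num)).const_mul r

theorem stmt_19_general (N : ℝ → ℝ) (r₀ : ℝ) (N0 : ℝ)
    (hlim : Tendsto N (𝓝[>] 0) (𝓝 N0))
    (k α : ℝ) (hk : 0 < k) (hα : α ∈ Set.Ioo (0 : ℝ) 1)
    (hb : ∀ R ∈ Set.Ioc (0 : ℝ) r₀, ∀ r ∈ Set.Ioo (R / 4) R,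
      N R - N r ≥ -(k * R ^ (α - 1) * (R - r))) :
    ∃ C : ℝ, 0 < C ∧ ∀ r ∈ Set.Ioc (0 : ℝ) r₀, N r - N0 ≥ -(C * r ^ α) := by
  set c : ℝ := 2⁻¹ ^ α
  have hc₀ : 0 ≤ c := by positivity
  have hc₁ : c < 1 := Real.rpow_lt_one (by norm_num) (by norm_num) hα.1
  refine ⟨k / 2 / (1 - c), div_pos (half_pos hk) (sub_pos.2 hc₁), fun r hr => ?_⟩
  have hstep (n : ℕ) : N (r * 2⁻¹ ^ (n + 1)) ≤ N (r * 2⁻¹ ^ n) + k / 2 * r ^ α * c ^ n := by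
    have hR : r * 2⁻¹ ^ n ∈ Set.Ioc 0 r₀ :=
      ⟨by have := hr.1; positivity,
        (mul_le_of_le_one_right hr.1.le (pow_le_one₀ (by norm_num) (by norm_num))).trans hr.2⟩
    have := le_add_of_almost_monotone_of_half hb hR
    rwa [mul_inv_two_pow_rpow hr.1.le, ← mul_assoc, div_eq_mul_inv, mul_assoc, ← pow_succ] at this
  have hN0 : N0 ≤ N (r * 2⁻¹ ^ 0) + k / 2 * r ^ α / (1 - c) :=
    le_add_div_one_sub_of_tendsto_of_le_add_geometric (by have := hr.1; positivity) hc₀ hc₁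
      hstep (hlim.comp (tendsto_mul_inv_two_pow_nhdsGT_zero hr.1))
  rw [pow_zero, mul_one, mul_div_right_comm] at hN0
  linarith

/-- Dyadic chaining argument (Theorem 4.4): an almost-monotonicity estimate at comparable
scales upgrades to a power-rate lower bound `N(r) - N(0) ≥ -C r^α`. -/
theorem stmt_19 (N : ℝ → ℝ) (r₀ : ℝ) (hr₀ : 0 < r₀) (N0 : ℝ)
    (hlim : Tendsto N (𝓝[>] 0) (𝓝 N0))
    (k α : ℝ) (hk : 0 < k) (hα : α ∈ Set.Ioo (0 : ℝ) 1)
    (hb : ∀ R ∈ Set.Ioc (0 : ℝ) r₀, ∀ r ∈ Set.Ioo (R / 4) R,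
      N R - N r ≥ -(k * R ^ (α - 1) * (R - r))) :
    ∃ C : ℝ, 0 < C ∧ ∀ r ∈ Set.Ioc (0 : ℝ) r₀, N r - N0 ≥ -(C * r ^ α) :=
  stmt_19_general N r₀ N0 hlim k α hk hα hb
end
end
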